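/- Let p₁ > 0 and let D, R, I : ℝ → ℝ be differentiable functions satisfying D' = 2I·(p₁D - p₁R), R' = 2I·(p₁R - p₁D), I' = -2p₁(D² + R²) + 4p₁·D·R on ℝ (Case 11 with p₃ = p₁). Assume D(0) ≠ R(0), and set C := (D(0) - R(0))² + 2·I(0)², S := √(C/2), and τ₀ := -(sign I(0))·arcosh(√(1 + 2·I(0)²/(D(0)-R(0))²)). Then for all τ ∈ ℝ: D(τ) = (D(0)+R(0))/2 + (sign(D(0)-R(0))/2)·√C / cosh(4p₁·S·τ + τ₀), R(τ) = (D(0)+R(0))/2 - (sign(D(0)-R(0))/2)·√C / cosh(4p₁·S·τ + τ₀), and I(τ) = -S·tanh(4p₁·S·τ + τ₀). Moreover, the constant solutions of this system are exactly the points with D = R. -/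

import Mathlib

/-!
Both `D + R` and the energy `(D - R)² + 2 I²` are first integrals. With `u = D - R` the system
reads `u' = 4 p₁ I u`, `I' = -2 p₁ u²`; the first equation is linear in `u`, so `u` never vanishes
and keeps the sign of `u 0`, which by the energy identity confines `I` to `(-S, S)`. There the
energy turns the second equation into the Riccati equation `I' = 4 p₁ (I² - S²)`, which
`artanh (-I / S)` linearises: its derivative is the constant `4 p₁ S`. The phase `τ₀` is chosen
so that `tanh τ₀ = -I 0 / S`, and `u² = C - 2 I² = C / cosh²` together with the sign of `u 0`
gives `u`.
-/

/-- The real inverse hyperbolic cosine. -/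
noncomputable def arcosh (x : ℝ) : ℝ := Real.log (x + Real.sqrt (x ^ 2 - 1))

theorem eq_of_hasDerivAt_zero {f : ℝ → ℝ} (hf : ∀ t, HasDerivAt f 0 t) (t : ℝ) : f t = f 0 :=
  is_const_of_deriv_eq_zero (fun t => (hf t).differentiableAt) (fun t => (hf t).deriv) t 0

theorem eq_mul_exp_integral_of_hasDerivAt {f g : ℝ → ℝ} (hg : Continuous g)
    (hf : ∀ t, HasDerivAt f (g t * f t) t) (t : ℝ) :
    f t = f 0 * Real.exp (∫ s in (0 : ℝ)..t, g s) := by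
  set A : ℝ → ℝ := fun t => ∫ s in (0 : ℝ)..t, g s
  have hA : ∀ t, HasDerivAt A (g t) t := fun t => (hg.integral_hasStrictDerivAt 0 t).hasDerivAt
  have hconst : ∀ t, HasDerivAt (fun t => f t * Real.exp (-A t)) 0 t := fun t =>
    ((hf t).mul (hA t).neg.exp).congr_deriv (by ring)
  have h := eq_of_hasDerivAt_zero hconst t
  simp only [A, intervalIntegral.integral_same, neg_zero, Real.exp_zero, mul_one] at h
  rw [← h, mul_assoc, ← Real.exp_add, neg_add_cancel, Real.exp_zero, mul_one]

theorem Real.hasDerivAt_artanh {x : ℝ} (hx : x ∈ Set.Ioo (-1) 1) :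
    HasDerivAt Real.artanh (1 - x ^ 2)⁻¹ x := by
  have h₁ : 0 < 1 + x := by linarith [hx.1]
  have h₂ : 0 < 1 - x := by linarith [hx.2]
  have hlog := ((((hasDerivAt_id x).const_add 1).div ((hasDerivAt_id x).const_sub 1)
    h₂.ne').log (div_pos h₁ h₂).ne').const_mul (1 / 2)
  refine (hlog.congr_deriv ?_).congr_of_eventuallyEq ?_
  · have : 1 - x ^ 2 ≠ 0 := by nlinarith
    simp only [id, Pi.div_apply]
    field_simp
    ring
  · filter_upwards [Ioo_mem_nhds hx.1 hx.2] with y hy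
    exact Real.artanh_eq_half_log (Set.Ioo_subset_Icc_self hy)

theorem eq_neg_mul_tanh_of_hasDerivAt {c S φ₀ : ℝ} {I : ℝ → ℝ} (hS : 0 < S)
    (hI : ∀ t, HasDerivAt I (c * (I t ^ 2 - S ^ 2)) t) (hlt : ∀ t, |I t| < S)
    (hφ₀ : Real.tanh φ₀ = -I 0 / S) (t : ℝ) :
    I t = -S * Real.tanh (c * S * t + φ₀) := by
  have hmem : ∀ t, -I t / S ∈ Set.Ioo (-1) 1 := fun t => by
    have := abs_lt.1 (hlt t)
    rw [Set.mem_Ioo, lt_div_iff₀ hS, div_lt_iff₀ hS]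
    constructor <;> linarith
  have hθ : ∀ t, HasDerivAt (fun t => Real.artanh (-I t / S) - c * S * t) 0 t := fun t => by
    have hne : S ^ 2 - I t ^ 2 ≠ 0 := by
      have := sq_lt_sq' (abs_lt.1 (hlt t)).1 (abs_lt.1 (hlt t)).2
      linarith
    refine (((Real.hasDerivAt_artanh (hmem t)).comp t ((hI t).neg.div_const S)).sub
      ((hasDerivAt_id t).const_mul (c * S))).congr_deriv ?_
    field_simp
    ring
  have h := eq_of_hasDerivAt_zero hθ t
  rw [mul_zero, sub_zero, ← hφ₀, Real.artanh_tanh] at h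
  have htanh : Real.tanh (c * S * t + φ₀) = -I t / S := by
    rw [← Real.tanh_artanh (hmem t), ← h]
    ring_nf
  rw [htanh]
  field_simp

theorem eq_sign_mul_of_sq_eq {a b c : ℝ} (hb : 0 ≤ b) (hsq : a ^ 2 = b ^ 2) (hac : 0 < a * c) :
    a = Real.sign c * b := by
  rcases lt_trichotomy c 0 with hc | hc | hc
  · rw [Real.sign_of_neg hc]
    nlinarith [neg_of_mul_pos_left hac hc.le]
  · simp [hc] at hac
  · rw [Real.sign_of_pos hc]
    nlinarith [pos_of_mul_pos_left hac hc.le]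

theorem tanh_neg_sign_mul_arcosh {a S : ℝ} (h : |a| < S) :
    Real.tanh (-Real.sign a * arcosh √(1 + a ^ 2 / (S ^ 2 - a ^ 2))) = -a / S := by
  have hgap : 0 < S ^ 2 - a ^ 2 := by
    have := sq_lt_sq' (abs_lt.1 h).1 (abs_lt.1 h).2
    linarith
  set y := √(1 + a ^ 2 / (S ^ 2 - a ^ 2))
  have hy2 : y ^ 2 = 1 + a ^ 2 / (S ^ 2 - a ^ 2) := Real.sq_sqrt (by positivity)
  have hy : 1 ≤ y := Real.one_le_sqrt.2 (by simp only [le_add_iff_nonneg_right]; positivity)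
  have hS : 0 < S := (abs_nonneg a).trans_lt h
  have hratio : (y ^ 2 - 1) / y ^ 2 = a ^ 2 / S ^ 2 := by
    rw [hy2]
    field_simp
    ring
  have htanh : Real.tanh (arcosh y) = |a| / S := by
    have hsqrt : √(y ^ 2 - 1) / y = √((y ^ 2 - 1) / y ^ 2) := by
      rw [Real.sqrt_div' _ (sq_nonneg _), Real.sqrt_sq (by linarith)]
    rw [show arcosh y = Real.arcosh y from rfl, Real.tanh_arcosh hy, hsqrt, hratio,
      Real.sqrt_div' _ (sq_nonneg _), Real.sqrt_sq_eq_abs, Real.sqrt_sq hS.le]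
  rcases lt_trichotomy a 0 with ha | ha | ha
  · rw [Real.sign_of_neg ha, neg_neg, one_mul, htanh, abs_of_neg ha]
  · simp [ha]
  · rw [Real.sign_of_pos ha, neg_one_mul, Real.tanh_neg, htanh, abs_of_pos ha, neg_div]

theorem Real.one_sub_tanh_sq (x : ℝ) : 1 - Real.tanh x ^ 2 = (Real.cosh x ^ 2)⁻¹ := by
  rw [Real.tanh_eq_sinh_div_cosh, div_pow, Real.cosh_sq]
  field_simp
  ring

namespace Case11

def IsSolution (p : ℝ) (D R I : ℝ → ℝ) : Prop :=
  (∀ τ, HasDerivAt D (2 * I τ * (p * D τ - p * R τ)) τ) ∧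
    (∀ τ, HasDerivAt R (2 * I τ * (p * R τ - p * D τ)) τ) ∧
    ∀ τ, HasDerivAt I (-(2 * p * (D τ ^ 2 + R τ ^ 2)) + 4 * p * D τ * R τ) τ

variable {p : ℝ} {D R I : ℝ → ℝ}

theorem IsSolution.add_eq (h : IsSolution p D R I) (t : ℝ) : D t + R t = D 0 + R 0 :=
  eq_of_hasDerivAt_zero (fun τ => ((h.1 τ).add (h.2.1 τ)).congr_deriv (by ring)) t

theorem IsSolution.hasDerivAt_sub (h : IsSolution p D R I) (t : ℝ) :
    HasDerivAt (fun τ => D τ - R τ) (4 * p * I t * (D t - R t)) t :=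
  ((h.1 t).sub (h.2.1 t)).congr_deriv (by ring)

theorem IsSolution.hasDerivAt_I (h : IsSolution p D R I) (t : ℝ) :
    HasDerivAt I (-(2 * p) * (D t - R t) ^ 2) t :=
  (h.2.2 t).congr_deriv (by ring)

theorem IsSolution.energy_eq (h : IsSolution p D R I) (t : ℝ) :
    (D t - R t) ^ 2 + 2 * I t ^ 2 = (D 0 - R 0) ^ 2 + 2 * I 0 ^ 2 :=
  eq_of_hasDerivAt_zero (fun τ => ((h.hasDerivAt_sub τ).pow 2 |>.add
    ((h.hasDerivAt_I τ).pow 2 |>.const_mul 2)).congr_deriv (by ring)) t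

theorem IsSolution.sub_mul_sub_zero_pos (h : IsSolution p D R I) (hne : D 0 ≠ R 0) (t : ℝ) :
    0 < (D t - R t) * (D 0 - R 0) := by
  have hcont : Continuous fun τ => 4 * p * I τ :=
    continuous_const.mul (continuous_iff_continuousAt.2 fun τ => (h.2.2 τ).continuousAt)
  rw [eq_mul_exp_integral_of_hasDerivAt hcont h.hasDerivAt_sub t, mul_right_comm]
  exact mul_pos (mul_self_pos.2 (sub_ne_zero.2 hne)) (Real.exp_pos _)

theorem IsSolution.abs_I_lt (h : IsSolution p D R I) (hne : D 0 ≠ R 0) (t : ℝ) :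
    |I t| < √(((D 0 - R 0) ^ 2 + 2 * I 0 ^ 2) / 2) := by
  have hsub : 0 < (D t - R t) ^ 2 :=
    sq_pos_of_ne_zero (left_ne_zero_of_mul (h.sub_mul_sub_zero_pos hne t).ne')
  rw [Real.lt_sqrt (abs_nonneg _), sq_abs, ← h.energy_eq t]
  linarith

theorem isSolution_const_iff (hp : p ≠ 0) (x y z : ℝ) :
    IsSolution p (fun _ => x) (fun _ => y) (fun _ => z) ↔ x = y := by
  constructor
  · rintro ⟨-, -, hz⟩
    have h := (hz 0).unique (hasDerivAt_const 0 z)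
    have : (x - y) ^ 2 = 0 := by
      apply mul_left_cancel₀ (mul_ne_zero two_ne_zero hp)
      linear_combination -h
    exact sub_eq_zero.1 (pow_eq_zero_iff two_ne_zero |>.1 this)
  · rintro rfl
    refine ⟨fun τ => ?_, fun τ => ?_, fun τ => ?_⟩ <;>
      exact (hasDerivAt_const τ _).congr_deriv (by ring)

end Case11

/-- Case 11 (combination of p₁- and p₃-components), balanced case p₃ = p₁:
explicit solution and characterization of the constant solutions. -/
theorem stmt_9 (p₁ : ℝ) (hp₁ : 0 < p₁) (D R I : ℝ → ℝ)
    (hD : ∀ τ, HasDerivAt D (2 * I τ * (p₁ * D τ - p₁ * R τ)) τ)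
    (hR : ∀ τ, HasDerivAt R (2 * I τ * (p₁ * R τ - p₁ * D τ)) τ)
    (hI : ∀ τ, HasDerivAt I (-(2 * p₁ * (D τ ^ 2 + R τ ^ 2)) + 4 * p₁ * D τ * R τ) τ)
    (hne : D 0 ≠ R 0)
    (C S τ₀ : ℝ)
    (hC : C = (D 0 - R 0) ^ 2 + 2 * I 0 ^ 2)
    (hS : S = Real.sqrt (C / 2))
    (hτ₀ : τ₀ = -(Real.sign (I 0)) * arcosh (Real.sqrt (1 + 2 * I 0 ^ 2 / (D 0 - R 0) ^ 2))) :
    (∀ τ : ℝ,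
      D τ = (D 0 + R 0) / 2
              + Real.sign (D 0 - R 0) / 2 * Real.sqrt C / Real.cosh (4 * p₁ * S * τ + τ₀) ∧
      R τ = (D 0 + R 0) / 2
              - Real.sign (D 0 - R 0) / 2 * Real.sqrt C / Real.cosh (4 * p₁ * S * τ + τ₀) ∧
      I τ = -S * Real.tanh (4 * p₁ * S * τ + τ₀)) ∧
    -- the constant solutions of the system are exactly the points with D = R
    (∀ x y z : ℝ,
      ((∀ τ : ℝ, HasDerivAt (fun _ : ℝ => x) (2 * z * (p₁ * x - p₁ * y)) τ) ∧
       (∀ τ : ℝ, HasDerivAt (fun _ : ℝ => y) (2 * z * (p₁ * y - p₁ * x)) τ) ∧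
       (∀ τ : ℝ, HasDerivAt (fun _ : ℝ => z)
          (-(2 * p₁ * (x ^ 2 + y ^ 2)) + 4 * p₁ * x * y) τ)) ↔ x = y) := by
  refine ⟨fun τ => ?_, Case11.isSolution_const_iff hp₁.ne'⟩
  have h : Case11.IsSolution p₁ D R I := ⟨hD, hR, hI⟩
  have hlt : ∀ t, |I t| < S := fun t => hS ▸ hC ▸ h.abs_I_lt hne t
  have hSpos : 0 < S := (abs_nonneg _).trans_lt (hlt 0)
  have hC2 : C = 2 * S ^ 2 := by
    rw [hS, Real.sq_sqrt (by rw [hC]; positivity)]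
    ring
  have hE : ∀ t, (D t - R t) ^ 2 + 2 * I t ^ 2 = C := fun t => by rw [h.energy_eq, hC]
  have hI' : ∀ t, HasDerivAt I (4 * p₁ * (I t ^ 2 - S ^ 2)) t := fun t =>
    (h.hasDerivAt_I t).congr_deriv (by linear_combination (-2 * p₁) * (hE t + hC2))
  have hφ₀ : Real.tanh τ₀ = -I 0 / S := by
    have hsub₀ : (D 0 - R 0) ^ 2 = 2 * (S ^ 2 - I 0 ^ 2) := by linear_combination hE 0 + hC2
    rw [hτ₀, hsub₀, mul_div_mul_left _ _ two_ne_zero, tanh_neg_sign_mul_arcosh (hlt 0)]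
  have hIτ := eq_neg_mul_tanh_of_hasDerivAt hSpos hI' hlt hφ₀ τ
  have hsub : D τ - R τ = Real.sign (D 0 - R 0) * (√C / Real.cosh (4 * p₁ * S * τ + τ₀)) := by
    refine eq_sign_mul_of_sq_eq (div_nonneg (Real.sqrt_nonneg _) (Real.cosh_pos _).le) ?_
      (h.sub_mul_sub_zero_pos hne τ)
    rw [div_pow, Real.sq_sqrt (by rw [hC2]; positivity), div_eq_mul_inv, ← Real.one_sub_tanh_sq]
    set T := Real.tanh (4 * p₁ * S * τ + τ₀)
    linear_combination hE τ + T ^ 2 * hC2 - 2 * (I τ - S * T) * hIτ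
  have hsum := h.add_eq τ
  exact ⟨by linear_combination (hsum + hsub) / 2, by linear_combination (hsum - hsub) / 2, hIτ⟩
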